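/- arXiv:2203.04597 — 2 statements merged into one kernel-verified Lean document; each statement's English description precedes it below -/
import Mathlib

section
/- For a weak contact metric structure (φ,Q,ξ,η,g) on M, the tensors N⁽²⁾ and N⁽⁴⁾ vanish identically: (φX)(η(Y)) - η([φX,Y]) - (φY)(η(X)) + η([φY,X]) = 0 and ξ(η(X)) - η([ξ,X]) = 0 for all smooth vector fields X,Y; in particular dη(ξ,X) = 0 for all X. -/
open scoped Manifold

noncomputable section

/-- Smooth vector fields on a manifold `M`, modelled as derivations of the algebra of smooth
real-valued functions on `M`. -/
abbrev VectorField {E : Type*} [NormedAddCommGroup E] [NormedSpace ℝ E]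
    {H : Type*} [TopologicalSpace H] (I : ModelWithCorners ℝ E H)
    (M : Type*) [TopologicalSpace M] [ChartedSpace H M] :=
  Derivation ℝ C^(⊤ : ℕ∞)⟮I, M; ℝ⟯ C^(⊤ : ℕ∞)⟮I, M; ℝ⟯

variable {E : Type*} [NormedAddCommGroup E] [NormedSpace ℝ E]
  {H : Type*} [TopologicalSpace H] {I : ModelWithCorners ℝ E H}
  {M : Type*} [TopologicalSpace M] [ChartedSpace H M]

/-- `dη(X,Y) = ½ (X(η(Y)) - Y(η(X)) - η([X,Y]))`. -/
def dEta (η : VectorField I M →ₗ[C^(⊤ : ℕ∞)⟮I, M; ℝ⟯] C^(⊤ : ℕ∞)⟮I, M; ℝ⟯)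
    (X Y : VectorField I M) : C^(⊤ : ℕ∞)⟮I, M; ℝ⟯ :=
  (2 : ℝ)⁻¹ • (X (η Y) - Y (η X) - η ⁅X, Y⁆)

/-- The Nijenhuis torsion `[φ,φ](X,Y) = φ²[X,Y] + [φX,φY] - φ[φX,Y] - φ[X,φY]`. -/
def nijenhuis (φ : VectorField I M → VectorField I M) (X Y : VectorField I M) :
    VectorField I M :=
  φ (φ ⁅X, Y⁆) + ⁅φ X, φ Y⁆ - φ ⁅φ X, Y⁆ - φ ⁅X, φ Y⁆

/-- `N⁽¹⁾(X,Y) = [φ,φ](X,Y) + 2 dη(X,Y) Qξ`. -/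
def N1 (φ Q : VectorField I M →ₗ[C^(⊤ : ℕ∞)⟮I, M; ℝ⟯] VectorField I M)
    (ξ : VectorField I M) (η : VectorField I M →ₗ[C^(⊤ : ℕ∞)⟮I, M; ℝ⟯] C^(⊤ : ℕ∞)⟮I, M; ℝ⟯)
    (X Y : VectorField I M) : VectorField I M :=
  nijenhuis ⇑φ X Y + ((2 : ℝ) • dEta η X Y) • Q ξ

/-- `N⁽²⁾(X,Y) = (φX)(η(Y)) - η([φX,Y]) - (φY)(η(X)) + η([φY,X])`. -/
def N2 (φ : VectorField I M →ₗ[C^(⊤ : ℕ∞)⟮I, M; ℝ⟯] VectorField I M)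
    (η : VectorField I M →ₗ[C^(⊤ : ℕ∞)⟮I, M; ℝ⟯] C^(⊤ : ℕ∞)⟮I, M; ℝ⟯)
    (X Y : VectorField I M) : C^(⊤ : ℕ∞)⟮I, M; ℝ⟯ :=
  (φ X) (η Y) - η ⁅φ X, Y⁆ - (φ Y) (η X) + η ⁅φ Y, X⁆

/-! In a weak almost contact structure `φ ξ = 0`: from `φ² ξ = 0` and injectivity of `Q` one
gets `φ ξ = f • ξ` with `f = η (φ ξ)`, and then `f² = η (φ² ξ) = 0`, so `f = 0` because smooth
functions have no nonzero nilpotents. Hence `η ∘ φ = 0`, so `2 dη(φX, Y) = (φX)(η Y) - η[φX, Y]`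
and `N⁽²⁾(X, Y) = 2 dη(φX, Y) - 2 dη(φY, X)`. For a weak contact metric structure
`dη(φX, Y) = g(φX, φY)` is symmetric in `X, Y`, so `N⁽²⁾ = 0`; and `dη(ξ, X) = -g(X, φ ξ) = 0`,
which is `N⁽⁴⁾ = 0` up to the factor `2`. -/

namespace WeakAlmostContact

variable {R V : Type*} [CommRing R] [AddCommGroup V] [Module R V]
  {φ Q : V →ₗ[R] V} {η : V →ₗ[R] R} {ξ : V}

theorem apply_reeb_eq_smul (hQ : Function.Injective Q)
    (hφφ : ∀ X, φ (φ X) = -(Q X) + η X • Q ξ) (hηξ : η ξ = 1) :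
    φ ξ = η (φ ξ) • ξ := by
  have hφφξ : φ (φ ξ) = 0 := by rw [hφφ, hηξ, one_smul, neg_add_cancel]
  apply hQ
  have hQφξ := hφφ (φ ξ)
  rw [hφφξ, map_zero, eq_comm, neg_add_eq_zero] at hQφξ
  rw [hQφξ, map_smul]

theorem apply_reeb_eq_zero [IsReduced R] (hQ : Function.Injective Q)
    (hφφ : ∀ X, φ (φ X) = -(Q X) + η X • Q ξ) (hηξ : η ξ = 1) :
    φ ξ = 0 := by
  have hφξ := apply_reeb_eq_smul hQ hφφ hηξ
  set f := η (φ ξ)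
  have hf_sq : f ^ 2 = 0 := by
    have : η (φ (φ ξ)) = f ^ 2 := by
      simp only [hφξ, map_smul, hηξ, smul_eq_mul, mul_one, sq]
    rw [← this, hφφ, hηξ, one_smul, neg_add_cancel, map_zero]
  rw [hφξ, IsReduced.eq_zero f ⟨2, hf_sq⟩, zero_smul]

theorem eta_apply_eq_zero (hφξ : φ ξ = 0) (hηξ : η ξ = 1)
    (hD : ∀ X, η X = 0 → η (φ X) = 0) (X : V) :
    η (φ X) = 0 := by
  have hX : η (X - η X • ξ) = 0 := by rw [map_sub, map_smul, hηξ, smul_eq_mul, mul_one, sub_self]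
  simpa only [map_sub, map_smul, hφξ, smul_zero, sub_zero] using hD _ hX

end WeakAlmostContact

section SmoothFunctions

variable {n : WithTop ℕ∞}

instance ContMDiffMap.instIsReduced : IsReduced C^n⟮I, M; ℝ⟯ :=
  isReduced_of_injective ContMDiffMap.coeFnRingHom DFunLike.coe_injective

end SmoothFunctions

section ExteriorDerivative

variable {η : VectorField I M →ₗ[C^(⊤ : ℕ∞)⟮I, M; ℝ⟯] C^(⊤ : ℕ∞)⟮I, M; ℝ⟯}

theorem two_smul_dEta (X Y : VectorField I M) :
    (2 : ℝ) • dEta η X Y = X (η Y) - Y (η X) - η ⁅X, Y⁆ := by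
  rw [dEta, smul_smul, mul_inv_cancel₀ two_ne_zero, one_smul]

theorem dEta_swap (X Y : VectorField I M) : dEta η X Y = -dEta η Y X := by
  rw [dEta, dEta, ← lie_skew X Y, map_neg, ← smul_neg]
  congr 1
  abel

theorem two_smul_dEta_of_eta_eq_zero {X : VectorField I M} (hX : η X = 0) (Y : VectorField I M) :
    (2 : ℝ) • dEta η X Y = X (η Y) - η ⁅X, Y⁆ := by
  rw [two_smul_dEta, hX, map_zero, sub_zero]

theorem two_smul_dEta_of_eta_eq_one {ξ : VectorField I M} (hξ : η ξ = 1) (X : VectorField I M) :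
    (2 : ℝ) • dEta η ξ X = ξ (η X) - η ⁅ξ, X⁆ := by
  rw [two_smul_dEta, hξ, Derivation.map_one_eq_zero, sub_zero]

variable {φ : VectorField I M →ₗ[C^(⊤ : ℕ∞)⟮I, M; ℝ⟯] VectorField I M}

theorem N2_eq_two_smul_dEta_sub (hηφ : ∀ X, η (φ X) = 0) (X Y : VectorField I M) :
    N2 φ η X Y = (2 : ℝ) • dEta η (φ X) Y - (2 : ℝ) • dEta η (φ Y) X := by
  rw [two_smul_dEta_of_eta_eq_zero (hηφ X), two_smul_dEta_of_eta_eq_zero (hηφ Y), N2]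
  abel

variable {g : VectorField I M →ₗ[C^(⊤ : ℕ∞)⟮I, M; ℝ⟯] VectorField I M →ₗ[C^(⊤ : ℕ∞)⟮I, M; ℝ⟯]
  C^(⊤ : ℕ∞)⟮I, M; ℝ⟯}

theorem N2_eq_zero_of_contact (hηφ : ∀ X, η (φ X) = 0) (hg_symm : ∀ X Y, g X Y = g Y X)
    (hcontact : ∀ X Y, g X (φ Y) = dEta η X Y) (X Y : VectorField I M) :
    N2 φ η X Y = 0 := by
  rw [N2_eq_two_smul_dEta_sub hηφ, ← hcontact, ← hcontact, hg_symm, sub_self]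

theorem dEta_reeb_eq_zero_of_contact {ξ : VectorField I M} (hφξ : φ ξ = 0)
    (hcontact : ∀ X Y, g X (φ Y) = dEta η X Y) (X : VectorField I M) :
    dEta η ξ X = 0 := by
  rw [dEta_swap, ← hcontact, hφξ, map_zero, neg_zero]

end ExteriorDerivative

theorem weak_contact_N2_N4_vanish_general
    (φ Q : VectorField I M →ₗ[C^(⊤ : ℕ∞)⟮I, M; ℝ⟯] VectorField I M)
    (hQ : Function.Bijective Q)
    (ξ : VectorField I M)
    (η : VectorField I M →ₗ[C^(⊤ : ℕ∞)⟮I, M; ℝ⟯] C^(⊤ : ℕ∞)⟮I, M; ℝ⟯)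
    (g : VectorField I M →ₗ[C^(⊤ : ℕ∞)⟮I, M; ℝ⟯] VectorField I M →ₗ[C^(⊤ : ℕ∞)⟮I, M; ℝ⟯] C^(⊤ : ℕ∞)⟮I, M; ℝ⟯)
    (hφφ : ∀ X, φ (φ X) = -(Q X) + η X • Q ξ)
    (hηξ : η ξ = 1)
    (hD : ∀ X, η X = 0 → η (φ X) = 0)
    (hg_symm : ∀ X Y, g X Y = g Y X)
    (hcontact : ∀ X Y, g X (φ Y) = dEta η X Y)
    :
    (∀ X Y, N2 φ η X Y = 0) ∧ (∀ X, ξ (η X) - η ⁅ξ, X⁆ = 0) ∧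
      (∀ X, dEta η ξ X = 0) := by
  have hφξ := WeakAlmostContact.apply_reeb_eq_zero hQ.injective hφφ hηξ
  have hηφ := WeakAlmostContact.eta_apply_eq_zero hφξ hηξ hD
  have hdηξ := dEta_reeb_eq_zero_of_contact hφξ hcontact
  refine ⟨N2_eq_zero_of_contact hηφ hg_symm hcontact, fun X => ?_, hdηξ⟩
  rw [← two_smul_dEta_of_eta_eq_one hηξ, hdηξ, smul_zero]

theorem weak_contact_N2_N4_vanish
    [FiniteDimensional ℝ E] [I.Boundaryless] [IsManifold I (⊤ : ℕ∞) M]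
    (n : ℕ) (hn : 1 ≤ n) (hdim : Module.finrank ℝ E = 2 * n + 1)
    (φ Q : VectorField I M →ₗ[C^(⊤ : ℕ∞)⟮I, M; ℝ⟯] VectorField I M)
    (hQ : Function.Bijective Q)
    (ξ : VectorField I M)
    (η : VectorField I M →ₗ[C^(⊤ : ℕ∞)⟮I, M; ℝ⟯] C^(⊤ : ℕ∞)⟮I, M; ℝ⟯)
    (g : VectorField I M →ₗ[C^(⊤ : ℕ∞)⟮I, M; ℝ⟯] VectorField I M →ₗ[C^(⊤ : ℕ∞)⟮I, M; ℝ⟯] C^(⊤ : ℕ∞)⟮I, M; ℝ⟯)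
    (ν : ℝ) (hν : 0 < ν)
    (hφφ : ∀ X, φ (φ X) = -(Q X) + η X • Q ξ)
    (hηξ : η ξ = 1)
    (hQξ : Q ξ = ν • ξ)
    (hD : ∀ X, η X = 0 → η (φ X) = 0)
    (hg_symm : ∀ X Y, g X Y = g Y X)
    (hg_pos : ∀ X (x : M), 0 ≤ g X X x)
    (hg_def : ∀ X, g X X = 0 → X = 0)
    (hcompat : ∀ X Y, g (φ X) (φ Y) = g X (Q Y) - η X * η (Q Y))
    (hcontact : ∀ X Y, g X (φ Y) = dEta η X Y)
    :
    (∀ X Y, N2 φ η X Y = 0) ∧ (∀ X, ξ (η X) - η ⁅ξ, X⁆ = 0) ∧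
      (∀ X, dEta η ξ X = 0) :=
  weak_contact_N2_N4_vanish_general φ Q hQ ξ η g hφφ hηξ hD hg_symm hcontact
end
end

section
/- Rigidity of Sasakian structures: if (φ,Q,ξ,η,g) is a weak Sasakian structure on M (i.e., a weak contact metric structure with N⁽¹⁾ ≡ 0), then Q is ν times the identity on every tangent space: Q_x = ν·id_{T_xM} for every x ∈ M. Consequently φ' := ν^{-1/2}·φ and g' := ν^{1/2}·(g - η⊗η) + η⊗η define a (classical) Sasakian structure (φ',ξ,η,g') on M, so the weak Sasakian structure is homothetically equivalent to a Sasakian structure. -/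
open scoped Manifold

noncomputable section

variable {E : Type*} [NormedAddCommGroup E] [NormedSpace ℝ E]
  {H : Type*} [TopologicalSpace H] {I : ModelWithCorners ℝ E H}
  {M : Type*} [TopologicalSpace M] [ChartedSpace H M]

/-!
Applying `η` to `N⁽¹⁾(X,Y) = 0` kills every `φ`-term of the Nijenhuis torsion (`η ∘ φ = 0`), so
`η[φX, φY] = -2ν dη(X,Y)` and hence `dη(φX, φY) = ν dη(X,Y)`. Through the contact condition and the
compatibility of `g` this reads `g(X, QφY) = ν g(X, φY)`, i.e. `Q = ν` on the image of `φ`. On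
`ker η` we have `φ² = -Q`, so there `Q² = νQ`, and invertibility of `Q` gives `Q = ν`; together
with `Qξ = νξ` this is `Q = ν·id`. The identities of the rescaled structure follow, positivity of
`g'` from `g(X,X) - η(X)² = g(X - η(X)ξ, X - η(X)ξ)`.
-/

section WeakAlmostContact

variable {R V : Type*} [CommRing R] [AddCommGroup V] [Module R V]
  {φ Q : V →ₗ[R] V} {ξ : V} {η : V →ₗ[R] R} {g : V →ₗ[R] V →ₗ[R] R}

theorem eta_sub_eta_smul (hηξ : η ξ = 1) (X : V) : η (X - η X • ξ) = 0 := by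
  rw [map_sub, map_smul, hηξ, smul_eq_mul, mul_one, sub_self]

theorem eta_phi_eq_zero [IsReduced R] (hφφ : ∀ X, φ (φ X) = -(Q X) + η X • Q ξ)
    (hηξ : η ξ = 1) (hD : ∀ X, η X = 0 → η (φ X) = 0) (X : V) : η (φ X) = 0 := by
  have hφ : ∀ Y, η (φ Y) = η Y * η (φ ξ) := fun Y => by
    have hdecomp : φ Y = φ (Y - η Y • ξ) + η Y • φ ξ := by rw [map_sub, map_smul]; abel
    rw [hdecomp, map_add, hD _ (eta_sub_eta_smul hηξ Y), zero_add, map_smul, smul_eq_mul]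
  have hφφξ : φ (φ ξ) = 0 := by rw [hφφ, hηξ, one_smul, neg_add_cancel]
  -- `η (φ ξ)` squares to `η (φ (φ ξ)) = 0`
  have hφξ : η (φ ξ) = 0 :=
    IsReduced.eq_zero _ ⟨2, by rw [pow_two, ← hφ, hφφξ, map_zero]⟩
  rw [hφ, hφξ, mul_zero]

theorem g_sub_eta_mul_eta (hηξ : η ξ = 1) (hg_symm : ∀ X Y, g X Y = g Y X)
    (hgξ : ∀ X, g X ξ = η X) (X : V) :
    g X X - η X * η X = g (X - η X • ξ) (X - η X • ξ) := by
  simp only [map_sub, map_smul, LinearMap.sub_apply, LinearMap.smul_apply, hgξ, hg_symm ξ X, hηξ,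
    smul_eq_mul]
  ring

variable [Algebra ℝ R] {ν : ℝ}

theorem g_xi_eq_eta (hν : ν ≠ 0) (hηξ : η ξ = 1) (hφξ : φ ξ = 0)
    (hgφφ : ∀ X Y, g (φ X) (φ Y) = ν • (g X Y - η X * η Y)) (X : V) : g X ξ = η X := by
  have h := hgφφ X ξ
  rw [hφξ, map_zero, hηξ, mul_one, eq_comm, smul_eq_zero_iff_right hν, sub_eq_zero] at h
  exact h

variable [Module ℝ V]

theorem phi_xi_eq_zero (hν : ν ≠ 0) (hηξ : η ξ = 1) (hηφ : ∀ X, η (φ X) = 0)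
    (hφφ : ∀ X, φ (φ X) = ν • (-X + η X • ξ))
    (hgφφ : ∀ X Y, g (φ X) (φ Y) = ν • (g X Y - η X * η Y))
    (hg_def : ∀ X, g X X = 0 → X = 0) : φ ξ = 0 := by
  have hφφξ : φ (φ ξ) = 0 := by rw [hφφ, hηξ, one_smul, neg_add_cancel, smul_zero]
  have h := hgφφ (φ ξ) (φ ξ)
  rw [hφφξ, map_zero, hηφ, mul_zero, sub_zero, eq_comm,
    smul_eq_zero_iff_right hν] at h
  exact hg_def _ h

variable [IsScalarTower ℝ R V]

theorem eta_Q_eq_smul (hφφ : ∀ X, φ (φ X) = -(Q X) + η X • Q ξ) (hηξ : η ξ = 1)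
    (hQξ : Q ξ = ν • ξ) (hηφ : ∀ X, η (φ X) = 0) (X : V) : η (Q X) = ν • η X := by
  have h := congrArg η (hφφ X)
  rw [hηφ, map_add, map_neg, map_smul, hQξ, LinearMap.map_smul_of_tower, hηξ, smul_eq_mul,
    mul_smul_comm, mul_one] at h
  exact (neg_add_eq_zero.mp h.symm)

theorem Q_phi_eq_smul (hcompat : ∀ X Y, g (φ X) (φ Y) = g X (Q Y) - η X * η (Q Y))
    (hg_def : ∀ X, g X X = 0 → X = 0) (hηφ : ∀ X, η (φ X) = 0)
    (hηQ : ∀ X, η (Q X) = ν • η X)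
    (hΦ : ∀ X Y, g (φ X) (φ (φ Y)) = ν • g X (φ Y)) (Y : V) : Q (φ Y) = ν • φ Y := by
  have h : ∀ X, g X (Q (φ Y) - ν • φ Y) = 0 := fun X => by
    have := hcompat X (φ Y)
    rw [hηQ, hηφ, smul_zero, mul_zero, sub_zero, hΦ] at this
    rw [map_sub, ← this, LinearMap.map_smul_of_tower, sub_self]
  exact sub_eq_zero.mp (hg_def _ (h _))

theorem Q_eq_smul (hQ : Function.Injective Q) (hφφ : ∀ X, φ (φ X) = -(Q X) + η X • Q ξ)
    (hηξ : η ξ = 1) (hQξ : Q ξ = ν • ξ) (hQφ : ∀ Y, Q (φ Y) = ν • φ Y) (X : V) :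
    Q X = ν • X := by
  set Y := X - η X • ξ
  -- on `ker η`, `Q` and `-φ²` agree, and `Q` commutes with `φ²`
  have hφφY : φ (φ Y) = -(Q Y) := by rw [hφφ, eta_sub_eta_smul hηξ, zero_smul, add_zero]
  have hQQY : Q (Q Y) = Q (ν • Y) := by
    have := hQφ (φ Y)
    rw [hφφY, map_neg, smul_neg, neg_inj] at this
    rw [this, LinearMap.map_smul_of_tower]
  have hQY : Q Y = ν • Y := hQ hQQY
  calc Q X = Q Y + η X • Q ξ := by rw [← map_smul, ← map_add, sub_add_cancel]
    _ = ν • X := by rw [hQY, hQξ, smul_comm (η X) ν ξ, ← smul_add, sub_add_cancel]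

theorem phi_phi_eq_smul (hφφ : ∀ X, φ (φ X) = -(Q X) + η X • Q ξ) (hQ : ∀ X, Q X = ν • X)
    (X : V) : φ (φ X) = ν • (-X + η X • ξ) := by
  rw [hφφ, hQ, hQ, smul_add, smul_neg, smul_comm]

theorem g_phi_phi (hcompat : ∀ X Y, g (φ X) (φ Y) = g X (Q Y) - η X * η (Q Y))
    (hQ : ∀ X, Q X = ν • X) (X Y : V) : g (φ X) (φ Y) = ν • (g X Y - η X * η Y) := by
  rw [hcompat, hQ, LinearMap.map_smul_of_tower, LinearMap.map_smul_of_tower, mul_smul_comm,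
    smul_sub]

end WeakAlmostContact

instance ContMDiffMap.isReduced {n : WithTop ℕ∞} : IsReduced C^n⟮I, M; ℝ⟯ :=
  isReduced_of_injective ContMDiffMap.coeFnRingHom ContMDiffMap.coe_injective

section VectorField

variable {φ Q : VectorField I M →ₗ[C^(⊤ : ℕ∞)⟮I, M; ℝ⟯] VectorField I M} {ξ : VectorField I M}
  {η : VectorField I M →ₗ[C^(⊤ : ℕ∞)⟮I, M; ℝ⟯] C^(⊤ : ℕ∞)⟮I, M; ℝ⟯} {ν : ℝ}

theorem eta_lie_phi_phi (hηξ : η ξ = 1) (hQξ : Q ξ = ν • ξ) (hηφ : ∀ X, η (φ X) = 0)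
    {X Y : VectorField I M} (hN1 : N1 φ Q ξ η X Y = 0) :
    η ⁅φ X, φ Y⁆ = -((2 * ν) • dEta η X Y) := by
  have h := congrArg η hN1
  simp only [N1, nijenhuis, map_add, map_sub, map_smul, hηφ, hQξ, LinearMap.map_smul_of_tower,
    hηξ, map_zero] at h
  rw [zero_add, sub_zero, sub_zero, smul_eq_mul, mul_smul_comm, mul_one, smul_smul,
    mul_comm ν] at h
  exact eq_neg_of_add_eq_zero_left h

theorem dEta_phi_phi (hηξ : η ξ = 1) (hQξ : Q ξ = ν • ξ) (hηφ : ∀ X, η (φ X) = 0)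
    {X Y : VectorField I M} (hN1 : N1 φ Q ξ η X Y = 0) :
    dEta η (φ X) (φ Y) = ν • dEta η X Y := by
  rw [dEta, hηφ, hηφ, map_zero, map_zero, eta_lie_phi_phi hηξ hQξ hηφ hN1]
  module

theorem nijenhuis_smul (c : ℝ) (φ : VectorField I M →ₗ[C^(⊤ : ℕ∞)⟮I, M; ℝ⟯] VectorField I M)
    (X Y : VectorField I M) :
    nijenhuis (fun Z => c • φ Z) X Y = (c * c) • nijenhuis φ X Y := by
  have hl : ∀ W₁ W₂ : VectorField I M, ⁅c • W₁, W₂⁆ = c • ⁅W₁, W₂⁆ :=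
    fun W₁ W₂ => smul_lie c W₁ W₂
  have hr : ∀ W₁ W₂ : VectorField I M, ⁅W₁, c • W₂⁆ = c • ⁅W₁, W₂⁆ :=
    fun W₁ W₂ => lie_smul c W₁ W₂
  rw [nijenhuis, hl, hr, hl, hr]
  simp only [LinearMap.map_smul_of_tower, smul_smul, nijenhuis, smul_add, smul_sub]

theorem nijenhuis_smul_add_eq_zero {c : ℝ} (hc : c * c * ν = 1) (hQξ : Q ξ = ν • ξ)
    {X Y : VectorField I M} (hN1 : N1 φ Q ξ η X Y = 0) :
    nijenhuis (fun Z => c • φ Z) X Y + ((2 : ℝ) • dEta η X Y) • ξ = 0 :=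
  calc _ = (c * c) • N1 φ Q ξ η X Y := by
        rw [N1, nijenhuis_smul, hQξ, smul_add, smul_comm _ ν ξ, smul_smul, hc, one_smul]
    _ = 0 := by rw [hN1, smul_zero]

end VectorField

theorem weak_Sasakian_rigidity_general
    (φ Q : VectorField I M →ₗ[C^(⊤ : ℕ∞)⟮I, M; ℝ⟯] VectorField I M)
    (hQ : Function.Bijective Q)
    (ξ : VectorField I M)
    (η : VectorField I M →ₗ[C^(⊤ : ℕ∞)⟮I, M; ℝ⟯] C^(⊤ : ℕ∞)⟮I, M; ℝ⟯)
    (g : VectorField I M →ₗ[C^(⊤ : ℕ∞)⟮I, M; ℝ⟯] VectorField I M →ₗ[C^(⊤ : ℕ∞)⟮I, M; ℝ⟯] C^(⊤ : ℕ∞)⟮I, M; ℝ⟯)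
    (ν : ℝ) (hν : 0 < ν)
    (hφφ : ∀ X, φ (φ X) = -(Q X) + η X • Q ξ)
    (hηξ : η ξ = 1)
    (hQξ : Q ξ = ν • ξ)
    (hD : ∀ X, η X = 0 → η (φ X) = 0)
    (hg_symm : ∀ X Y, g X Y = g Y X)
    (hg_pos : ∀ X (x : M), 0 ≤ g X X x)
    (hg_def : ∀ X, g X X = 0 → X = 0)
    (hcompat : ∀ X Y, g (φ X) (φ Y) = g X (Q Y) - η X * η (Q Y))
    (hcontact : ∀ X Y, g X (φ Y) = dEta η X Y)
    (hN1 : ∀ X Y, N1 φ Q ξ η X Y = 0)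
    :
    (∀ X, Q X = ν • X) ∧
    (∀ X, (Real.sqrt ν)⁻¹ • φ ((Real.sqrt ν)⁻¹ • φ X) = -X + η X • ξ) ∧
    (∀ X Y, (Real.sqrt ν • (g X Y - η X * η Y) + η X * η Y : C^(⊤ : ℕ∞)⟮I, M; ℝ⟯) =
      Real.sqrt ν • (g Y X - η Y * η X) + η Y * η X) ∧
    (∀ X (x : M), 0 ≤ (Real.sqrt ν • (g X X - η X * η X) + η X * η X : C^(⊤ : ℕ∞)⟮I, M; ℝ⟯) x) ∧
    (∀ X Y,
      (Real.sqrt ν • (g ((Real.sqrt ν)⁻¹ • φ X) ((Real.sqrt ν)⁻¹ • φ Y) -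
          η ((Real.sqrt ν)⁻¹ • φ X) * η ((Real.sqrt ν)⁻¹ • φ Y)) +
        η ((Real.sqrt ν)⁻¹ • φ X) * η ((Real.sqrt ν)⁻¹ • φ Y) : C^(⊤ : ℕ∞)⟮I, M; ℝ⟯) =
      (Real.sqrt ν • (g X Y - η X * η Y) + η X * η Y) - η X * η Y) ∧
    (∀ X Y,
      (Real.sqrt ν • (g X ((Real.sqrt ν)⁻¹ • φ Y) - η X * η ((Real.sqrt ν)⁻¹ • φ Y)) +
        η X * η ((Real.sqrt ν)⁻¹ • φ Y) : C^(⊤ : ℕ∞)⟮I, M; ℝ⟯) = dEta η X Y) ∧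
    (∀ X Y, nijenhuis (fun Z => (Real.sqrt ν)⁻¹ • φ Z) X Y +
      ((2 : ℝ) • dEta η X Y) • ξ = 0) := by
  have hν0 : ν ≠ 0 := hν.ne'
  have hηφ := eta_phi_eq_zero hφφ hηξ hD
  have hQφ := Q_phi_eq_smul hcompat hg_def hηφ (eta_Q_eq_smul hφφ hηξ hQξ hηφ) fun X Y => by
    rw [hcontact, hcontact, dEta_phi_phi hηξ hQξ hηφ (hN1 X Y)]
  have hQν := Q_eq_smul hQ.injective hφφ hηξ hQξ hQφ
  have hφφν := phi_phi_eq_smul hφφ hQν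
  have hgφφ := g_phi_phi hcompat hQν
  have hgξ := g_xi_eq_eta hν0 hηξ (phi_xi_eq_zero hν0 hηξ hηφ hφφν hgφφ hg_def) hgφφ
  have hs0 : √ν ≠ 0 := (Real.sqrt_pos.mpr hν).ne'
  have hs : (√ν)⁻¹ * (√ν)⁻¹ * ν = 1 := by
    rw [← mul_inv, Real.mul_self_sqrt hν.le, inv_mul_cancel₀ hν0]
  refine ⟨hQν, fun X => ?_, fun X Y => ?_, fun X x => ?_, fun X Y => ?_, fun X Y => ?_,
    fun X Y => nijenhuis_smul_add_eq_zero hs hQξ (hN1 X Y)⟩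
  · rw [LinearMap.map_smul_of_tower, smul_smul, hφφν, smul_smul, hs, one_smul]
  · rw [hg_symm X Y, mul_comm (η X)]
  · rw [g_sub_eta_mul_eta hηξ hg_symm hgξ]
    simp only [ContMDiffMap.coe_add, ContMDiffMap.coe_smul, ContMDiffMap.coe_mul, Pi.add_apply,
      Pi.smul_apply, Pi.mul_apply, smul_eq_mul]
    exact add_nonneg (mul_nonneg (Real.sqrt_nonneg ν) (hg_pos _ x)) (mul_self_nonneg _)
  · simp only [LinearMap.map_smul_of_tower, LinearMap.smul_apply, hηφ, smul_zero, mul_zero,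
      sub_zero, add_zero, hgφφ, smul_smul]
    rw [← mul_assoc (√ν)⁻¹, hs, mul_one, add_sub_cancel_right]
  · simp only [LinearMap.map_smul_of_tower, hηφ, smul_zero, mul_zero, sub_zero, add_zero,
      smul_smul]
    rw [mul_inv_cancel₀ hs0, one_smul, hcontact]

theorem weak_Sasakian_rigidity
    [FiniteDimensional ℝ E] [I.Boundaryless] [IsManifold I ((⊤ : ℕ∞) : WithTop ℕ∞) M]
    (n : ℕ) (hn : 1 ≤ n) (hdim : Module.finrank ℝ E = 2 * n + 1)
    (φ Q : VectorField I M →ₗ[C^(⊤ : ℕ∞)⟮I, M; ℝ⟯] VectorField I M)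
    (hQ : Function.Bijective Q)
    (ξ : VectorField I M)
    (η : VectorField I M →ₗ[C^(⊤ : ℕ∞)⟮I, M; ℝ⟯] C^(⊤ : ℕ∞)⟮I, M; ℝ⟯)
    (g : VectorField I M →ₗ[C^(⊤ : ℕ∞)⟮I, M; ℝ⟯] VectorField I M →ₗ[C^(⊤ : ℕ∞)⟮I, M; ℝ⟯] C^(⊤ : ℕ∞)⟮I, M; ℝ⟯)
    (ν : ℝ) (hν : 0 < ν)
    (hφφ : ∀ X, φ (φ X) = -(Q X) + η X • Q ξ)
    (hηξ : η ξ = 1)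
    (hQξ : Q ξ = ν • ξ)
    (hD : ∀ X, η X = 0 → η (φ X) = 0)
    (hg_symm : ∀ X Y, g X Y = g Y X)
    (hg_pos : ∀ X (x : M), 0 ≤ g X X x)
    (hg_def : ∀ X, g X X = 0 → X = 0)
    (hcompat : ∀ X Y, g (φ X) (φ Y) = g X (Q Y) - η X * η (Q Y))
    (hcontact : ∀ X Y, g X (φ Y) = dEta η X Y)
    (hN1 : ∀ X Y, N1 φ Q ξ η X Y = 0)
    :
    (∀ X, Q X = ν • X) ∧
    (∀ X, (Real.sqrt ν)⁻¹ • φ ((Real.sqrt ν)⁻¹ • φ X) = -X + η X • ξ) ∧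
    (∀ X Y, (Real.sqrt ν • (g X Y - η X * η Y) + η X * η Y : C^(⊤ : ℕ∞)⟮I, M; ℝ⟯) =
      Real.sqrt ν • (g Y X - η Y * η X) + η Y * η X) ∧
    (∀ X (x : M), 0 ≤ (Real.sqrt ν • (g X X - η X * η X) + η X * η X : C^(⊤ : ℕ∞)⟮I, M; ℝ⟯) x) ∧
    (∀ X Y,
      (Real.sqrt ν • (g ((Real.sqrt ν)⁻¹ • φ X) ((Real.sqrt ν)⁻¹ • φ Y) -
          η ((Real.sqrt ν)⁻¹ • φ X) * η ((Real.sqrt ν)⁻¹ • φ Y)) +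
        η ((Real.sqrt ν)⁻¹ • φ X) * η ((Real.sqrt ν)⁻¹ • φ Y) : C^(⊤ : ℕ∞)⟮I, M; ℝ⟯) =
      (Real.sqrt ν • (g X Y - η X * η Y) + η X * η Y) - η X * η Y) ∧
    (∀ X Y,
      (Real.sqrt ν • (g X ((Real.sqrt ν)⁻¹ • φ Y) - η X * η ((Real.sqrt ν)⁻¹ • φ Y)) +
        η X * η ((Real.sqrt ν)⁻¹ • φ Y) : C^(⊤ : ℕ∞)⟮I, M; ℝ⟯) = dEta η X Y) ∧
    (∀ X Y, nijenhuis (fun Z => (Real.sqrt ν)⁻¹ • φ Z) X Y +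
      ((2 : ℝ) • dEta η X Y) • ξ = 0) :=
  weak_Sasakian_rigidity_general φ Q hQ ξ η g ν hν hφφ hηξ hQξ hD hg_symm hg_pos hg_def hcompat
    hcontact hN1
end
end
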